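/- arXiv:2102.11834 — 2 statements merged into one kernel-verified Lean document; each statement's English description precedes it below -/
import Mathlib

section
/- In the PhD algorithm with quotas on a three-sided PhD market with quotas and strict preferences, a student's matches on the advisor–student market cannot decrease over iterations: for every iteration τ ≥ 2 and student s with advisor-market capacity q_s^(τ) at iteration τ, μ_AS^(τ)(s)_k ≥_s μ_AS^(τ−1)(s)_k for all k = 1,…,q_s^(τ). In particular, the number of advisors matched to s at iteration τ is at least min(q_s^(τ), number of advisors matched to s at iteration τ−1). -/
/-!
The capacities only shrink, `q_s^(τ+1) ≤ q_s^(τ)`, because a student cannot fill more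
co-advisor spots than his capacity on that market. Write `ν = μ_AS^(τ)` and `μ = μ_AS^(τ+1)`.

If the students propose, let every student keep her `q_s^(τ+1)` best partners from `ν ∪ μ`.
This join is stable for the capacities of iteration `τ+1`, so by student-optimality `μ` is
spot by spot at least as good for her as the join, which is at least as good as `ν`.

If the advisors propose, let every advisor keep his `q_a` best partners from `ν ∪ μ`. This
join is stable for the capacities of iteration `τ`, so advisor-optimality of `ν` shows that
advisors weakly prefer `ν` to `μ` spot by spot; by the opposition of interests of the two
sides of a stable matching, students weakly prefer `μ`.

The bound on the number of advisors follows because every actual advisor of a student ranks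
above the empty spots.
-/

open scoped Classical

namespace Stmt14

/-- Strict preferences over partners in `W` plus staying single (`none`), encoded by a
rank function injective on the relevant alternatives; higher rank = more preferred. -/
def StrictPref {β : Type*} (pref : Option β → ℕ) (W : Finset β) : Prop :=
  Set.InjOn pref (insert none (Option.some '' (W : Set β)))

variable {α β : Type*}

/-- The set of partners of man `m` in the many-to-many matching `ν`. -/
noncomputable def ptnrsM (ν : Finset (α × β)) (m : α) : Finset β :=
  (ν.filter fun p => p.1 = m).image Prod.snd

/-- The set of partners of woman `w` in the many-to-many matching `ν`. -/
noncomputable def ptnrsW (ν : Finset (α × β)) (w : β) : Finset α :=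
  (ν.filter fun p => p.2 = w).image Prod.fst

/-- A valid many-to-many matching with quotas `qM`, `qW`: all pairs lie in `M × W`,
every person is matched at most their quota many times, and (being a set of pairs)
no man–woman pair is matched more than once. -/
def ValidQ (M : Finset α) (W : Finset β) (qM : α → ℕ) (qW : β → ℕ)
    (ν : Finset (α × β)) : Prop :=
  (∀ p ∈ ν, p.1 ∈ M ∧ p.2 ∈ W) ∧
  (∀ m, (ptnrsM ν m).card ≤ qM m) ∧ (∀ w, (ptnrsW ν w).card ≤ qW w)

/-- `x` is preferred to the set `P` of current partners padded with self-matches up to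
the quota `q`: `x` beats some current partner, or there is a free spot and `x` is
acceptable. -/
def PrefOver {X : Type*} (pref : Option X → ℕ) (q : ℕ) (P : Finset X) (x : X) : Prop :=
  (∃ y ∈ P, pref (some y) < pref (some x)) ∨ (P.card < q ∧ pref none < pref (some x))

/-- Individual rationality: no spot is filled by an unacceptable partner. -/
def IndRatQ (prefM : α → Option β → ℕ) (prefW : β → Option α → ℕ)
    (ν : Finset (α × β)) : Prop :=
  ∀ p ∈ ν, prefM p.1 none < prefM p.1 (some p.2) ∧ prefW p.2 none < prefW p.2 (some p.1)

/-- The (unmatched) pair `(m, w)` blocks `ν`. -/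
def BlocksQ (prefM : α → Option β → ℕ) (prefW : β → Option α → ℕ)
    (qM : α → ℕ) (qW : β → ℕ) (ν : Finset (α × β)) (m : α) (w : β) : Prop :=
  (m, w) ∉ ν ∧ PrefOver (prefM m) (qM m) (ptnrsM ν m) w ∧
    PrefOver (prefW w) (qW w) (ptnrsW ν w) m

/-- Stability of a many-to-many matching with quotas. -/
def StableQ (M : Finset α) (W : Finset β) (prefM : α → Option β → ℕ)
    (prefW : β → Option α → ℕ) (qM : α → ℕ) (qW : β → ℕ) (ν : Finset (α × β)) : Prop :=
  IndRatQ prefM prefW ν ∧ ∀ m ∈ M, ∀ w ∈ W, ¬ BlocksQ prefM prefW qM qW ν m w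

/-- The `k`-th best partner (0-indexed) of a person with preferences `pref` and quota
`q`, among the set `P` of actual partners padded with self-matches (`none`) up to the
quota: the list of partners is sorted from most to least preferred. -/
noncomputable def spot {X : Type*} (pref : Option X → ℕ) (q : ℕ) (P : Finset X) (k : ℕ) :
    Option X :=
  (((P.toList.map some ++ List.replicate (q - P.card) none).insertionSort
      fun x y => pref y ≤ pref x)[k]?).getD none

/-- The man-optimal stable matching with quotas (extended Gale–Shapley with men
proposing): every man's `k`-th best spot is at least as good as in any other stable
matching. -/
def ManOptQ (M : Finset α) (W : Finset β) (prefM : α → Option β → ℕ)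
    (prefW : β → Option α → ℕ) (qM : α → ℕ) (qW : β → ℕ) (ν : Finset (α × β)) : Prop :=
  ValidQ M W qM qW ν ∧ StableQ M W prefM prefW qM qW ν ∧
  ∀ ν' : Finset (α × β), ValidQ M W qM qW ν' → StableQ M W prefM prefW qM qW ν' →
    ∀ m ∈ M, ∀ k, k < qM m →
      prefM m (spot (prefM m) (qM m) (ptnrsM ν' m) k) ≤
        prefM m (spot (prefM m) (qM m) (ptnrsM ν m) k)

/-- The woman-optimal stable matching with quotas (extended Gale–Shapley with women
proposing). -/
def WomanOptQ (M : Finset α) (W : Finset β) (prefM : α → Option β → ℕ)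
    (prefW : β → Option α → ℕ) (qM : α → ℕ) (qW : β → ℕ) (ν : Finset (α × β)) : Prop :=
  ValidQ M W qM qW ν ∧ StableQ M W prefM prefW qM qW ν ∧
  ∀ ν' : Finset (α × β), ValidQ M W qM qW ν' → StableQ M W prefM prefW qM qW ν' →
    ∀ w ∈ W, ∀ k, k < qW w →
      prefW w (spot (prefW w) (qW w) (ptnrsW ν' w) k) ≤
        prefW w (spot (prefW w) (qW w) (ptnrsW ν w) k)


variable {σ γ : Type*}

open Finset

lemma StrictPref.lt_of_le_of_ne {X : Type*} {pref : Option X → ℕ} {W : Finset X}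
    (h : StrictPref pref W) {x y : X} (hx : x ∈ W) (hy : y ∈ W) (hxy : x ≠ y)
    (hle : pref (some x) ≤ pref (some y)) : pref (some x) < pref (some y) :=
  hle.lt_of_ne fun he => hxy <| Option.some_injective _ <|
    h (Set.mem_insert_of_mem _ ⟨x, hx, rfl⟩) (Set.mem_insert_of_mem _ ⟨y, hy, rfl⟩) he

lemma le_getElem_iff_lt_countP_of_pairwise {Y : Type*} {f : Y → ℕ} {L : List Y}
    (hL : L.Pairwise fun x y => f y ≤ f x) {k : ℕ} (hk : k < L.length) (t : ℕ) :
    t ≤ f L[k] ↔ k < L.countP fun x => t ≤ f x := by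
  have hanti : ∀ i j (hi : i < L.length) (hj : j < L.length), i ≤ j → f L[j] ≤ f L[i] := by
    intro i j hi hj hij
    rcases hij.lt_or_eq with h | rfl
    · exact List.pairwise_iff_getElem.1 hL i j hi hj h
    · exact le_rfl
  constructor
  · intro ht
    have hall : (L.take (k + 1)).countP (fun x => t ≤ f x) = k + 1 := by
      rw [List.countP_eq_length.2, List.length_take]
      · omega
      intro x hx
      obtain ⟨i, hi, rfl⟩ := List.getElem_of_mem hx
      simp only [List.getElem_take, decide_eq_true_eq]
      exact ht.trans (hanti _ _ _ _ (by rw [List.length_take] at hi; omega))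
    calc k < k + 1 := k.lt_add_one
      _ = (L.take (k + 1)).countP (fun x => t ≤ f x) := hall.symm
      _ ≤ _ := (List.take_sublist _ _).countP_le
  · intro hc
    by_contra ht
    have hdrop : (L.drop k).countP (fun x => t ≤ f x) = 0 := by
      rw [List.countP_eq_zero]
      intro x hx
      obtain ⟨i, hi, rfl⟩ := List.getElem_of_mem hx
      simp only [List.getElem_drop, decide_eq_true_eq, not_le]
      exact (hanti _ _ _ _ (by omega)).trans_lt (not_le.1 ht)
    have := List.countP_le_length (p := fun x => decide (t ≤ f x)) (l := L.take k)
    rw [← List.take_append_drop k L, List.countP_append, hdrop] at hc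
    simp only [List.length_take] at this
    omega

section Spot
variable {X : Type*} (r : Option X → ℕ) {q k : ℕ} {P : Finset X}

noncomputable def spotCount (q : ℕ) (P : Finset X) (t : ℕ) : ℕ :=
  #{x ∈ P | t ≤ r (some x)} + if t ≤ r none then q - #P else 0

lemma le_spot_iff (hP : #P ≤ q) (hk : k < q) (t : ℕ) :
    t ≤ r (spot r q P k) ↔ k < spotCount r q P t := by
  have : Std.Total (fun x y : Option X => r y ≤ r x) := ⟨fun a b => le_total (r b) (r a)⟩
  have : IsTrans (Option X) (fun x y => r y ≤ r x) := ⟨fun _ _ _ h1 h2 => h2.trans h1⟩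
  have hlen : ((P.toList.map some ++ List.replicate (q - #P) none).insertionSort
      fun x y => r y ≤ r x).length = q := by
    simp only [List.length_insertionSort, List.length_append, List.length_map,
      Finset.length_toList, List.length_replicate]
    omega
  have hcount : P.toList.countP (fun x => t ≤ r (some x)) = #{x ∈ P | t ≤ r (some x)} := by
    conv_rhs => rw [← P.toList_toFinset]
    exact (P.nodup_toList.card_eq_countP).symm
  rw [spot, List.getElem?_eq_getElem (by omega), Option.getD_some,
    le_getElem_iff_lt_countP_of_pairwise (List.pairwise_insertionSort _ _),
    (List.perm_insertionSort _ _).countP_eq, List.countP_append, List.countP_map,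
    List.countP_replicate, Function.comp_def, hcount, spotCount]
  simp only [decide_eq_true_eq]

lemma spotCount_of_none_lt {t : ℕ} (ht : r none < t) :
    spotCount r q P t = #{x ∈ P | t ≤ r (some x)} := by
  simp [spotCount, ht.not_ge]

lemma spotCount_of_le_none (hacc : ∀ x ∈ P, r none < r (some x)) (hP : #P ≤ q) {t : ℕ}
    (ht : t ≤ r none) : spotCount r q P t = q := by
  rw [spotCount, if_pos ht, Finset.filter_true_of_mem fun x hx => ht.trans (hacc x hx).le]
  omega

lemma le_spot_of_card_eq {t : ℕ} (hP : #P = q) (hk : k < q) (h : ∀ x ∈ P, t ≤ r (some x)) :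
    t ≤ r (spot r q P k) := by
  rw [le_spot_iff r hP.le hk, spotCount, Finset.filter_true_of_mem h]
  omega

lemma spot_sub_one_le {x : X} (hx : x ∈ P) (hP : #P ≤ q) :
    r (spot r q P (q - 1)) ≤ r (some x) := by
  have hq : 0 < q := (Finset.card_pos.2 ⟨x, hx⟩).trans_le hP
  by_contra! h
  rw [← Nat.add_one_le_iff, le_spot_iff r hP (by omega), spotCount] at h
  have := Finset.card_lt_card <|
    Finset.filter_ssubset (p := fun y => r (some x) + 1 ≤ r (some y)).2 ⟨x, hx, by omega⟩
  split_ifs at h <;> omega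

lemma none_lt_spot_of_lt_card (hacc : ∀ x ∈ P, r none < r (some x)) (hP : #P ≤ q)
    (hk : k < #P) : r none < r (spot r q P k) := by
  rw [← Nat.add_one_le_iff, le_spot_iff r hP (by omega),
    spotCount_of_none_lt r (Nat.lt_add_one _),
    Finset.filter_true_of_mem (p := fun x => r none + 1 ≤ r (some x)) hacc]
  exact hk

lemma spot_le_none_of_card_le (hP : #P ≤ q) (hkP : #P ≤ k) (hk : k < q) :
    r (spot r q P k) ≤ r none := by
  by_contra! h
  rw [← Nat.add_one_le_iff, le_spot_iff r hP hk,
    spotCount_of_none_lt r (Nat.lt_add_one _)] at h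
  exact (h.trans_le (Finset.card_filter_le _ _)).not_ge hkP

lemma min_card_le_card_of_spot_le {q' : ℕ} {P' : Finset X}
    (hacc : ∀ x ∈ P, r none < r (some x)) (hP : #P ≤ q) (hP' : #P' ≤ q')
    (h : ∀ k < q', r (spot r q P k) ≤ r (spot r q' P' k)) : min q' #P ≤ #P' := by
  by_contra! hlt
  have hk : #P' < #P := hlt.trans_le (min_le_right _ _)
  have hk' : #P' < q' := hlt.trans_le (min_le_left _ _)
  exact ((none_lt_spot_of_lt_card r hacc hP hk).trans_le (h _ hk')).not_ge
    (spot_le_none_of_card_le r hP' le_rfl hk')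

lemma prefOver_of_spot_lt {x : X} (hP : #P ≤ q) (hk : k < q)
    (hx : r (spot r q P k) < r (some x)) (hacc : r none < r (some x)) : PrefOver r q P x := by
  rcases hP.lt_or_eq with hlt | heq
  · exact Or.inr ⟨hlt, hacc⟩
  · by_contra! h
    simp only [PrefOver, not_or, not_exists, not_and, not_lt] at h
    exact hx.not_ge (le_spot_of_card_eq r heq hk h.1)

lemma exists_mem_sdiff_of_spot_lt {q' : ℕ} {P' : Finset X}
    (hacc : ∀ x ∈ P', r none < r (some x)) (hP : #P ≤ q) (hP' : #P' ≤ q') (hk : k < q')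
    (hq : q' ≤ q) (h : r (spot r q' P' k) < r (spot r q P k)) :
    ∃ x ∈ P, x ∉ P' ∧ r (spot r q' P' k) < r (some x) := by
  set t := r (spot r q' P' k) + 1
  have hin : k < spotCount r q P t := (le_spot_iff r hP (hk.trans_le hq) t).1 h
  have hout : ¬ k < spotCount r q' P' t := fun h' =>
    (Nat.lt_add_one _).not_ge ((le_spot_iff r hP' hk t).2 h')
  have ht : r none < t := by
    by_contra! ht
    exact hout (by rwa [spotCount_of_le_none r hacc hP' ht])
  rw [spotCount_of_none_lt r ht] at hin hout
  obtain ⟨x, hx, hx'⟩ := Finset.exists_mem_notMem_of_card_lt_card (hin.trans_le' (not_lt.1 hout))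
  simp only [Finset.mem_filter, not_and] at hx hx'
  exact ⟨x, hx.1, fun h' => hx' h' hx.2, hx.2⟩

end Spot

section TopK
variable {X : Type*} {r : Option X → ℕ} {k : ℕ} {U T : Finset X}

structure IsTopK (r : Option X → ℕ) (k : ℕ) (U T : Finset X) : Prop where
  subset : T ⊆ U
  card_eq : #T = min k #U
  le_of_notMem : ∀ x ∈ U, x ∉ T → ∀ y ∈ T, r (some x) ≤ r (some y)

lemma exists_isTopK (r : Option X → ℕ) (k : ℕ) (U : Finset X) : ∃ T, IsTopK r k U T := by
  induction U using Finset.induction_on_min_value (fun x => r (some x)) with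
  | empty => exact ⟨∅, by simp, by simp, by simp⟩
  | insert a U haU hmin ih =>
    obtain ⟨T, hT⟩ := ih
    by_cases hk : k ≤ #U
    · refine ⟨T, hT.subset.trans (Finset.subset_insert _ _), ?_, ?_⟩
      · rw [hT.card_eq, Finset.card_insert_of_notMem haU]; omega
      · intro x hx hxT y hy
        rcases Finset.mem_insert.1 hx with rfl | hx
        · exact hmin y (hT.subset hy)
        · exact hT.le_of_notMem x hx hxT y hy
    · refine ⟨insert a U, subset_rfl, ?_, fun x hx hxT => absurd hx hxT⟩
      rw [Finset.card_insert_of_notMem haU]; omega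

lemma IsTopK.eq_of_card_lt (hT : IsTopK r k U T) (h : #T < k) : T = U :=
  Finset.eq_of_subset_of_card_le hT.subset (by rw [hT.card_eq] at h ⊢; omega)

lemma IsTopK.min_le_card_filter (hT : IsTopK r k U T) (t : ℕ) :
    min k #{x ∈ U | t ≤ r (some x)} ≤ #{x ∈ T | t ≤ r (some x)} := by
  by_cases hsub : {x ∈ U | t ≤ r (some x)} ⊆ T
  · exact (min_le_right _ _).trans <| Finset.card_le_card fun x hx =>
      Finset.mem_filter.2 ⟨hsub hx, (Finset.mem_filter.1 hx).2⟩
  · obtain ⟨x, hx, hxT⟩ := Finset.not_subset.1 hsub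
    rw [Finset.mem_filter] at hx
    rw [Finset.filter_true_of_mem fun y hy => hx.2.trans (hT.le_of_notMem x hx.1 hxT y hy),
      hT.card_eq]
    exact min_le_min_left _ (Finset.card_filter_le _ _)

lemma spot_le_spot_of_isTopK {q q' : ℕ} {P : Finset X} (hT : IsTopK r q' U T) (hPU : P ⊆ U)
    (hacc : ∀ x ∈ U, r none < r (some x)) (hP : #P ≤ q) (hq : q' ≤ q) (hk : k < q') :
    r (spot r q P k) ≤ r (spot r q' T k) := by
  have hT' : #T ≤ q' := hT.card_eq ▸ min_le_left _ _
  set t := r (spot r q P k)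
  have hin : k < spotCount r q P t := (le_spot_iff r hP (hk.trans_le hq) t).1 le_rfl
  rw [le_spot_iff r hT' hk]
  rcases le_or_gt t (r none) with ht | ht
  · rwa [spotCount_of_le_none r (fun x hx => hacc x (hT.subset hx)) hT' ht]
  · rw [spotCount_of_none_lt r ht] at hin ⊢
    have := Finset.card_le_card (Finset.filter_subset_filter (fun x => t ≤ r (some x)) hPU)
    exact (lt_min hk (hin.trans_le this)).trans_le (hT.min_le_card_filter t)

end TopK

section PrefOver
variable {X : Type*} {r : Option X → ℕ} {q k : ℕ} {P U T : Finset X} {x : X}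

lemma PrefOver.none_lt (h : PrefOver r q P x) (hacc : ∀ y ∈ P, r none < r (some y)) :
    r none < r (some x) := by
  rcases h with ⟨y, hy, hlt⟩ | ⟨-, h⟩
  · exact (hacc y hy).trans hlt
  · exact h

lemma PrefOver.or_of_subset_union {q₁ q₂ : ℕ} {P₁ P₂ : Finset X} (h : PrefOver r q P x)
    (hP : P ⊆ P₁ ∪ P₂) (hq : #P < q → #P₁ < q₁ ∨ #P₂ < q₂) :
    PrefOver r q₁ P₁ x ∨ PrefOver r q₂ P₂ x := by
  rcases h with ⟨y, hy, hlt⟩ | ⟨hlt, hacc⟩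
  · exact (Finset.mem_union.1 (hP hy)).imp (fun hy => Or.inl ⟨y, hy, hlt⟩)
      (fun hy => Or.inl ⟨y, hy, hlt⟩)
  · exact (hq hlt).imp (fun h => Or.inr ⟨h, hacc⟩) (fun h => Or.inr ⟨h, hacc⟩)

lemma card_eq_and_lt_of_not_prefOver {W : Finset X} (hr : StrictPref r W) (hPW : P ⊆ W)
    (hx : x ∈ W) (hxP : x ∉ P) (hP : #P ≤ q) (hacc : r none < r (some x))
    (h : ¬ PrefOver r q P x) : #P = q ∧ ∀ y ∈ P, r (some x) < r (some y) := by
  simp only [PrefOver, not_or, not_exists, not_and, not_lt] at h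
  refine ⟨hP.antisymm (not_lt.1 fun hlt => (h.2 hlt).not_gt hacc), fun y hy => ?_⟩
  exact hr.lt_of_le_of_ne hx (hPW hy) (fun he => hxP (he ▸ hy)) (h.1 y hy)

lemma IsTopK.prefOver_of_mem {W : Finset X} (hT : IsTopK r k U T) (hr : StrictPref r W)
    (hUW : U ⊆ W) (hPU : P ⊆ U) (hP : #P ≤ q) (hk : k ≤ q) (hx : x ∈ T) (hxP : x ∉ P)
    (hacc : r none < r (some x)) : PrefOver r q P x := by
  rcases hP.lt_or_eq with hlt | heq
  · exact Or.inr ⟨hlt, hacc⟩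
  have hnsub : ¬ P ⊆ T := fun hsub => by
    have hcard := Finset.card_le_card fun y hy =>
      Finset.mem_erase.2 ⟨fun he : y = x => hxP (he ▸ hy), hsub hy⟩
    have hpos := Finset.card_pos.2 ⟨x, hx⟩
    have hTk : #T ≤ k := hT.card_eq ▸ min_le_left _ _
    rw [Finset.card_erase_of_mem hx] at hcard
    omega
  obtain ⟨y, hy, hyT⟩ := Finset.not_subset.1 hnsub
  exact Or.inl ⟨y, hy, hr.lt_of_le_of_ne (hUW (hPU hy)) (hUW (hT.subset hx))
    (fun he => hxP (he ▸ hy)) (hT.le_of_notMem y (hPU hy) hyT x hx)⟩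

lemma IsTopK.not_prefOver (hT : IsTopK r k U T) (hPU : P ⊆ U) (hkP : k ≤ #P)
    (hP : ∀ y ∈ P, r (some x) < r (some y)) : ¬ PrefOver r k T x := by
  have hPF : P ⊆ {y ∈ U | r (some x) + 1 ≤ r (some y)} := fun y hy =>
    Finset.mem_filter.2 ⟨hPU hy, hP y hy⟩
  have hmin := hT.min_le_card_filter (r (some x) + 1)
  rw [min_eq_left (hkP.trans (Finset.card_le_card hPF))] at hmin
  have hTk : #T ≤ k := hT.card_eq ▸ min_le_left _ _
  have hF : {y ∈ T | r (some x) + 1 ≤ r (some y)} = T :=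
    Finset.eq_of_subset_of_card_le (Finset.filter_subset _ _) (hTk.trans hmin)
  rintro (⟨y, hy, hlt⟩ | ⟨hlt, -⟩)
  · rw [← hF, Finset.mem_filter] at hy
    omega
  · exact hlt.not_ge (hmin.trans (Finset.card_filter_le _ _))

lemma IsTopK.notMem_of_prefOver (hT : IsTopK r k U T) (hxT : x ∉ T)
    (h : PrefOver r k T x) : x ∉ U := fun hxU => by
  rcases h with ⟨y, hy, hlt⟩ | ⟨hlt, -⟩
  · exact hlt.not_ge (hT.le_of_notMem x hxU hxT y hy)
  · exact hxT (hT.eq_of_card_lt hlt ▸ hxU)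

end PrefOver

section Matching
variable {M : Finset α} {W : Finset β} {prefM : α → Option β → ℕ} {prefW : β → Option α → ℕ}
  {qM : α → ℕ} {qW : β → ℕ} {ν κ : Finset (α × β)} {m : α} {w : β}

@[simp] lemma mem_ptnrsM : w ∈ ptnrsM ν m ↔ (m, w) ∈ ν := by simp [ptnrsM]

@[simp] lemma mem_ptnrsW : m ∈ ptnrsW ν w ↔ (m, w) ∈ ν := by simp [ptnrsW]

lemma ptnrsM_mono (h : κ ⊆ ν) : ptnrsM κ m ⊆ ptnrsM ν m := fun _ hw =>
  mem_ptnrsM.2 (h (mem_ptnrsM.1 hw))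

lemma ptnrsW_mono (h : κ ⊆ ν) : ptnrsW κ w ⊆ ptnrsW ν w := fun _ hm =>
  mem_ptnrsW.2 (h (mem_ptnrsW.1 hm))

@[simp] lemma ptnrsM_image_swap : ptnrsM (ν.image Prod.swap) w = ptnrsW ν w := by
  ext; simp

@[simp] lemma ptnrsW_image_swap : ptnrsW (ν.image Prod.swap) m = ptnrsM ν m := by
  ext; simp

lemma ValidQ.ptnrsM_subset (h : ValidQ M W qM qW ν) (m : α) : ptnrsM ν m ⊆ W := fun _ hw =>
  (h.1 _ (mem_ptnrsM.1 hw)).2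

lemma ValidQ.ptnrsW_subset (h : ValidQ M W qM qW ν) (w : β) : ptnrsW ν w ⊆ M := fun _ hm =>
  (h.1 _ (mem_ptnrsW.1 hm)).1

lemma ValidQ.image_swap (h : ValidQ M W qM qW ν) : ValidQ W M qW qM (ν.image Prod.swap) :=
  ⟨Finset.forall_mem_image.2 fun p hp => (h.1 p hp).symm, by simpa using h.2.2,
    by simpa using h.2.1⟩

lemma IndRatQ.image_swap (h : IndRatQ prefM prefW ν) :
    IndRatQ prefW prefM (ν.image Prod.swap) :=
  Finset.forall_mem_image.2 fun p hp => (h p hp).symm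

lemma StableQ.image_swap (h : StableQ M W prefM prefW qM qW ν) :
    StableQ W M prefW prefM qW qM (ν.image Prod.swap) :=
  ⟨h.1.image_swap, fun w hw m hm ⟨hmw, hw', hm'⟩ =>
    h.2 m hm w hw ⟨by simpa using hmw, by simpa using hm', by simpa using hw'⟩⟩

lemma IndRatQ.mono (h : IndRatQ prefM prefW ν) (hκ : κ ⊆ ν) : IndRatQ prefM prefW κ :=
  fun p hp => h p (hκ hp)

lemma IndRatQ.union (hν : IndRatQ prefM prefW ν) (hκ : IndRatQ prefM prefW κ) :
    IndRatQ prefM prefW (ν ∪ κ) := fun p hp =>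
  (Finset.mem_union.1 hp).elim (hν p) (hκ p)

lemma IndRatQ.none_lt_of_mem_ptnrsW (h : IndRatQ prefM prefW ν) (hm : m ∈ ptnrsW ν w) :
    prefW w none < prefW w (some m) :=
  (h _ (mem_ptnrsW.1 hm)).2

lemma sum_card_ptnrsM (h : ∀ p ∈ ν, p.1 ∈ M) : ∑ m ∈ M, #(ptnrsM ν m) = #ν := by
  rw [Finset.card_eq_sum_card_fiberwise h]
  refine Finset.sum_congr rfl fun m _ => Finset.card_image_of_injOn fun p hp p' hp' hpp' =>
    Prod.ext ((Finset.mem_filter.1 hp).2.trans (Finset.mem_filter.1 hp').2.symm) hpp'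

lemma sum_card_ptnrsW (h : ∀ p ∈ ν, p.2 ∈ W) : ∑ w ∈ W, #(ptnrsW ν w) = #ν := by
  rw [Finset.card_eq_sum_card_fiberwise h]
  refine Finset.sum_congr rfl fun w _ => Finset.card_image_of_injOn fun p hp p' hp' hpp' =>
    Prod.ext hpp' ((Finset.mem_filter.1 hp).2.trans (Finset.mem_filter.1 hp').2.symm)

lemma card_ptnrsM_eq_of_le (hκ : ∀ p ∈ κ, p.1 ∈ M ∧ p.2 ∈ W) (hν : ∀ p ∈ ν, p.1 ∈ M ∧ p.2 ∈ W)
    (hM : ∀ m ∈ M, #(ptnrsM κ m) ≤ #(ptnrsM ν m))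
    (hW : ∀ w ∈ W, #(ptnrsW ν w) ≤ #(ptnrsW κ w)) :
    ∀ m ∈ M, #(ptnrsM κ m) = #(ptnrsM ν m) := by
  refine (Finset.sum_eq_sum_iff_of_le hM).1 (le_antisymm (Finset.sum_le_sum hM) ?_)
  calc ∑ m ∈ M, #(ptnrsM ν m) = ∑ w ∈ W, #(ptnrsW ν w) := by
        rw [sum_card_ptnrsM fun p hp => (hν p hp).1, sum_card_ptnrsW fun p hp => (hν p hp).2]
    _ ≤ ∑ w ∈ W, #(ptnrsW κ w) := Finset.sum_le_sum hW
    _ = ∑ m ∈ M, #(ptnrsM κ m) := by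
        rw [sum_card_ptnrsM fun p hp => (hκ p hp).1, sum_card_ptnrsW fun p hp => (hκ p hp).2]

end Matching

section Join
variable {M : Finset α} {W : Finset β} {prefM : α → Option β → ℕ} {prefW : β → Option α → ℕ}

lemma exists_isTopK_ptnrsW (ρ : Finset (α × β)) (r : β → Option α → ℕ) (k : β → ℕ) :
    ∃ κ, ∀ w, IsTopK (r w) (k w) (ptnrsW ρ w) (ptnrsW κ w) := by
  choose T hT using fun w => exists_isTopK (r w) (k w) (ptnrsW ρ w)
  refine ⟨ρ.filter fun p => p.1 ∈ T p.2, fun w => ?_⟩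
  convert hT w using 1
  ext m
  simpa using fun hm => mem_ptnrsW.1 ((hT w).subset hm)

lemma card_eq_and_lt_of_mem_ptnrsM_sdiff (hPM : ∀ m ∈ M, StrictPref (prefM m) W)
    (hPW : ∀ w ∈ W, StrictPref (prefW w) M) {f : α → ℕ} {h k : β → ℕ} {U : β → Finset α}
    {ρ κ : Finset (α × β)} (hρV : ValidQ M W f h ρ) (hρS : StableQ M W prefM prefW f h ρ)
    (hκ : ∀ w, IsTopK (prefW w) (k w) (U w) (ptnrsW κ w)) (hUM : ∀ w, U w ⊆ M)
    (hρU : ∀ w, ptnrsW ρ w ⊆ U w) (hk : ∀ w, k w ≤ h w) (hκM : ∀ p ∈ κ, p.1 ∈ M ∧ p.2 ∈ W)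
    (hκI : IndRatQ prefM prefW κ) {m : α} {x : β} (hx : x ∈ ptnrsM κ m \ ptnrsM ρ m) :
    #(ptnrsM ρ m) = f m ∧ ∀ y ∈ ptnrsM ρ m, prefM m (some x) < prefM m (some y) := by
  obtain ⟨hxκ, hxρ⟩ := Finset.mem_sdiff.1 hx
  rw [mem_ptnrsM] at hxκ
  obtain ⟨hm, hxW⟩ := hκM _ hxκ
  have hmρ : m ∉ ptnrsW ρ x := by simpa using hxρ
  have hPOx : PrefOver (prefW x) (h x) (ptnrsW ρ x) m :=
    (hκ x).prefOver_of_mem (hPW x hxW) (hUM x) (hρU x) (hρV.2.2 x) (hk x)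
      (mem_ptnrsW.2 hxκ) hmρ (hκI _ hxκ).2
  exact card_eq_and_lt_of_not_prefOver (hPM m hm) (hρV.ptnrsM_subset m) hxW hxρ (hρV.2.1 m)
    (hκI _ hxκ).1 fun hPOm => hρS.2 m hm x hxW ⟨mem_ptnrsM.not.1 hxρ, hPOm, hPOx⟩

lemma card_ptnrsM_eq_of_isTopK {r : β → Option α → ℕ} {f : α → ℕ} {k : β → ℕ}
    {U : β → Finset α} {ρ κ : Finset (α × β)} (hκM : ∀ p ∈ κ, p.1 ∈ M ∧ p.2 ∈ W)
    (hρM : ∀ p ∈ ρ, p.1 ∈ M ∧ p.2 ∈ W) (hκ : ∀ w, IsTopK (r w) (k w) (U w) (ptnrsW κ w))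
    (hρU : ∀ w, ptnrsW ρ w ⊆ U w) (hρk : ∀ w, #(ptnrsW ρ w) ≤ k w)
    (hκf : ∀ m, #(ptnrsM κ m) ≤ f m)
    (hρf : ∀ m x, x ∈ ptnrsM κ m \ ptnrsM ρ m → #(ptnrsM ρ m) = f m) :
    ∀ m ∈ M, #(ptnrsM κ m) = #(ptnrsM ρ m) := by
  refine card_ptnrsM_eq_of_le hκM hρM (fun m _ => ?_) fun w _ => ?_
  · by_cases h : ptnrsM κ m ⊆ ptnrsM ρ m
    · exact Finset.card_le_card h
    · obtain ⟨x, hxκ, hxρ⟩ := Finset.not_subset.1 h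
      exact hρf m x (Finset.mem_sdiff.2 ⟨hxκ, hxρ⟩) ▸ hκf m
  · rw [(hκ w).card_eq]
    exact le_min (hρk w) (Finset.card_le_card (hρU w))

lemma IsTopK.not_prefOver_of_prefOver_ptnrsM (hPW : ∀ w ∈ W, StrictPref (prefW w) M)
    {f : α → ℕ} {h : β → ℕ} {ρ : Finset (α × β)} {k : ℕ} {U T : Finset α} {m : α} {w : β}
    (hT : IsTopK (prefW w) k U T) (hρV : ValidQ M W f h ρ)
    (hρS : StableQ M W prefM prefW f h ρ) (hm : m ∈ M) (hw : w ∈ W)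
    (hρU : ptnrsW ρ w ⊆ U) (hk : k ≤ h w) (hmU : m ∉ U)
    (hacc : prefW w none < prefW w (some m)) (hPOm : PrefOver (prefM m) (f m) (ptnrsM ρ m) w) :
    ¬ PrefOver (prefW w) k T m := by
  have hmρ : m ∉ ptnrsW ρ w := fun h => hmU (hρU h)
  obtain ⟨hfull, hlt⟩ := card_eq_and_lt_of_not_prefOver (hPW w hw) (hρV.ptnrsW_subset w) hm hmρ
    (hρV.2.2 w) hacc fun hPOw => hρS.2 m hm w hw ⟨mem_ptnrsW.not.1 hmρ, hPOm, hPOw⟩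
  exact hT.not_prefOver hρU (hfull ▸ hk) hlt

theorem validQ_stableQ_of_isTopK (hPM : ∀ m ∈ M, StrictPref (prefM m) W)
    (hPW : ∀ w ∈ W, StrictPref (prefW w) M) {fν fμ : α → ℕ} {g g' : β → ℕ}
    (hf : ∀ m, fμ m ≤ fν m) (hg : ∀ w, g' w ≤ g w) (hfg : (∀ m, fν m = fμ m) ∨ ∀ w, g w = g' w)
    {ν μ κ : Finset (α × β)} (hνV : ValidQ M W fν g ν) (hνS : StableQ M W prefM prefW fν g ν)
    (hμV : ValidQ M W fμ g' μ) (hμS : StableQ M W prefM prefW fμ g' μ)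
    (hκ : ∀ w, IsTopK (prefW w) (g' w) (ptnrsW (ν ∪ μ) w) (ptnrsW κ w)) :
    ValidQ M W fν g' κ ∧ StableQ M W prefM prefW fν g' κ := by
  have hκνμ : κ ⊆ ν ∪ μ := fun p hp => mem_ptnrsW.1 ((hκ p.2).subset (mem_ptnrsW.2 hp))
  have hνμM : ∀ p ∈ ν ∪ μ, p.1 ∈ M ∧ p.2 ∈ W := fun p hp =>
    (Finset.mem_union.1 hp).elim (hνV.1 p) (hμV.1 p)
  have hκM : ∀ p ∈ κ, p.1 ∈ M ∧ p.2 ∈ W := fun p hp => hνμM p (hκνμ hp)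
  have hκI : IndRatQ prefM prefW κ := (hνS.1.union hμS.1).mono hκνμ
  have hUM : ∀ w, ptnrsW (ν ∪ μ) w ⊆ M := fun w m hm => (hνμM _ (mem_ptnrsW.1 hm)).1
  have hνU : ∀ w, ptnrsW ν w ⊆ ptnrsW (ν ∪ μ) w := fun w => ptnrsW_mono Finset.subset_union_left
  have hμU : ∀ w, ptnrsW μ w ⊆ ptnrsW (ν ∪ μ) w := fun w => ptnrsW_mono Finset.subset_union_right
  have hκsub : ∀ m, ptnrsM κ m ⊆ ptnrsM ν m ∪ ptnrsM μ m := fun m x hx => by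
    simpa using hκνμ (mem_ptnrsM.1 hx)
  have hfullν := fun m x => card_eq_and_lt_of_mem_ptnrsM_sdiff (m := m) (x := x) hPM hPW hνV hνS
    hκ hUM hνU hg hκM hκI
  have hfullμ := fun m x => card_eq_and_lt_of_mem_ptnrsM_sdiff (m := m) (x := x) hPM hPW hμV hμS
    hκ hUM hμU (fun _ => le_rfl) hκM hκI
  -- a partner outside `ν m` ranks below all of `ν m`, and likewise for `μ`
  have hκνμm : ∀ m, ptnrsM κ m ⊆ ptnrsM ν m ∨ ptnrsM κ m ⊆ ptnrsM μ m := by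
    intro m
    by_contra! h
    obtain ⟨x, hxκ, hxν⟩ := Finset.not_subset.1 h.1
    obtain ⟨y, hyκ, hyμ⟩ := Finset.not_subset.1 h.2
    have hxμ : x ∈ ptnrsM μ m := (Finset.mem_union.1 (hκsub m hxκ)).resolve_left hxν
    have hyν : y ∈ ptnrsM ν m := (Finset.mem_union.1 (hκsub m hyκ)).resolve_right hyμ
    exact ((hfullν m x (Finset.mem_sdiff.2 ⟨hxκ, hxν⟩)).2 y hyν).asymm
      ((hfullμ m y (Finset.mem_sdiff.2 ⟨hyκ, hyμ⟩)).2 x hxμ)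
  have hcard : ∀ m, #(ptnrsM κ m) ≤ fν m := fun m => (hκνμm m).elim
    (fun h => (Finset.card_le_card h).trans (hνV.2.1 m))
    (fun h => (Finset.card_le_card h).trans ((hμV.2.1 m).trans (hf m)))
  have hslack : ∀ m ∈ M, #(ptnrsM κ m) < fν m →
      #(ptnrsM ν m) < fν m ∨ #(ptnrsM μ m) < fμ m := by
    rcases hfg with hfeq | hgeq
    · intro m hm hlt
      right
      rwa [← card_ptnrsM_eq_of_isTopK hκM hμV.1 hκ hμU hμV.2.2 (fun m => hfeq m ▸ hcard m)
        (fun m x hx => (hfullμ m x hx).1) m hm, ← hfeq m]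
    · intro m hm hlt
      left
      rwa [← card_ptnrsM_eq_of_isTopK hκM hνV.1 hκ hνU (fun w => hgeq w ▸ hνV.2.2 w) hcard
        (fun m x hx => (hfullν m x hx).1) m hm]
  refine ⟨⟨hκM, hcard, fun w => (hκ w).card_eq ▸ min_le_left _ _⟩, hκI, ?_⟩
  rintro m hm w hw ⟨hmw, hPOm, hPOw⟩
  have hmU := (hκ w).notMem_of_prefOver (mem_ptnrsW.not.2 hmw) hPOw
  have hacc := hPOw.none_lt fun y hy => hκI.none_lt_of_mem_ptnrsW hy
  rcases hPOm.or_of_subset_union (hκsub m) (hslack m hm) with h | h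
  · exact (hκ w).not_prefOver_of_prefOver_ptnrsM hPW hνV hνS hm hw (hνU w) (hg w) hmU hacc h hPOw
  · exact (hκ w).not_prefOver_of_prefOver_ptnrsM hPW hμV hμS hm hw (hμU w) le_rfl hmU hacc h hPOw

end Join

section Optimality
variable {M : Finset α} {W : Finset β} {prefM : α → Option β → ℕ} {prefW : β → Option α → ℕ}
  {f : α → ℕ} {g g' : β → ℕ} {ν μ : Finset (α × β)} {w : β} {k : ℕ}

theorem spot_le_spot_of_forall_spot_le (hPM : ∀ m ∈ M, StrictPref (prefM m) W)
    (hg : ∀ w, g' w ≤ g w) (hνV : ValidQ M W f g ν) (hνI : IndRatQ prefM prefW ν)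
    (hμV : ValidQ M W f g' μ) (hμS : StableQ M W prefM prefW f g' μ)
    (hM : ∀ m ∈ M, ∀ j < f m, prefM m (spot (prefM m) (f m) (ptnrsM μ m) j) ≤
      prefM m (spot (prefM m) (f m) (ptnrsM ν m) j))
    (hw : w ∈ W) (hk : k < g' w) :
    prefW w (spot (prefW w) (g w) (ptnrsW ν w) k) ≤
      prefW w (spot (prefW w) (g' w) (ptnrsW μ w) k) := by
  by_contra! hlt
  obtain ⟨m, hmν, hmμ, hm⟩ := exists_mem_sdiff_of_spot_lt (prefW w)
    (fun _ hx => hμS.1.none_lt_of_mem_ptnrsW hx) (hνV.2.2 w) (hμV.2.2 w) hk (hg w) hlt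
  have hmw : (m, w) ∈ ν := mem_ptnrsW.1 hmν
  have hmM : m ∈ M := (hνV.1 _ hmw).1
  have hPOw : PrefOver (prefW w) (g' w) (ptnrsW μ w) m :=
    prefOver_of_spot_lt _ (hμV.2.2 w) hk hm (hνI _ hmw).2
  -- stability of `μ` forces `m` to be full in `μ` with partners better than `w`, so his worst
  -- `μ`-spot beats his worst `ν`-spot, which is at most `w`
  obtain ⟨hfull, hbetter⟩ := card_eq_and_lt_of_not_prefOver (hPM m hmM) (hμV.ptnrsM_subset m) hw
    (by simpa using hmμ) (hμV.2.1 m) (hνI _ hmw).1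
    fun hPOm => hμS.2 m hmM w hw ⟨mem_ptnrsW.not.1 hmμ, hPOm, hPOw⟩
  have hwν : w ∈ ptnrsM ν m := mem_ptnrsM.2 hmw
  have hpos : 0 < f m := (Finset.card_pos.2 ⟨w, hwν⟩).trans_le (hνV.2.1 m)
  have h1 := hM m hmM (f m - 1) (by omega)
  have h2 := spot_sub_one_le (prefM m) hwν (hνV.2.1 m)
  have h3 := le_spot_of_card_eq (prefM m) (k := f m - 1) (t := prefM m (some w) + 1) hfull
    (by omega) hbetter
  omega

theorem spot_le_spot_of_womanOptQ (hPM : ∀ m ∈ M, StrictPref (prefM m) W)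
    (hPW : ∀ w ∈ W, StrictPref (prefW w) M) (hg : ∀ w, g' w ≤ g w)
    (hνV : ValidQ M W f g ν) (hνS : StableQ M W prefM prefW f g ν)
    (hμ : WomanOptQ M W prefM prefW f g' μ) (hw : w ∈ W) (hk : k < g' w) :
    prefW w (spot (prefW w) (g w) (ptnrsW ν w) k) ≤
      prefW w (spot (prefW w) (g' w) (ptnrsW μ w) k) := by
  obtain ⟨hμV, hμS, hμopt⟩ := hμ
  obtain ⟨κ, hκ⟩ := exists_isTopK_ptnrsW (ν ∪ μ) prefW g'
  obtain ⟨hκV, hκS⟩ := validQ_stableQ_of_isTopK hPM hPW (fun _ => le_rfl) hg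
    (Or.inl fun _ => rfl) hνV hνS hμV hμS hκ
  calc _ ≤ prefW w (spot (prefW w) (g' w) (ptnrsW κ w) k) :=
        spot_le_spot_of_isTopK (hκ w) (ptnrsW_mono Finset.subset_union_left)
          (fun _ hx => (hνS.1.union hμS.1).none_lt_of_mem_ptnrsW hx) (hνV.2.2 w) (hg w) hk
    _ ≤ _ := hμopt κ hκV hκS w hw k hk

theorem spot_le_spot_of_manOptQ (hPM : ∀ m ∈ M, StrictPref (prefM m) W)
    (hPW : ∀ w ∈ W, StrictPref (prefW w) M) (hg : ∀ w, g' w ≤ g w)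
    (hν : ManOptQ M W prefM prefW f g ν) (hμV : ValidQ M W f g' μ)
    (hμS : StableQ M W prefM prefW f g' μ) (hw : w ∈ W) (hk : k < g' w) :
    prefW w (spot (prefW w) (g w) (ptnrsW ν w) k) ≤
      prefW w (spot (prefW w) (g' w) (ptnrsW μ w) k) := by
  obtain ⟨hνV, hνS, hνopt⟩ := hν
  obtain ⟨κ, hκ⟩ := exists_isTopK_ptnrsW ((ν ∪ μ).image Prod.swap) prefM f
  obtain ⟨hκV, hκS⟩ := validQ_stableQ_of_isTopK hPW hPM hg (fun _ => le_rfl)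
    (Or.inr fun _ => rfl) hνV.image_swap hνS.image_swap hμV.image_swap hμS.image_swap
    (by simpa only [Finset.image_union] using hκ)
  refine spot_le_spot_of_forall_spot_le hPM hg hνV hνS.1 hμV hμS (fun m hm j hj => ?_) hw hk
  calc _ ≤ prefM m (spot (prefM m) (f m) (ptnrsW κ m) j) :=
        spot_le_spot_of_isTopK (hκ m) (by simpa using ptnrsM_mono Finset.subset_union_right)
          (fun _ hx => (hνS.1.union hμS.1).image_swap.none_lt_of_mem_ptnrsW hx) (hμV.2.1 m)
          le_rfl hj
    _ = prefM m (spot (prefM m) (f m) (ptnrsM (κ.image Prod.swap) m) j) := by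
        rw [ptnrsM_image_swap]
    _ ≤ _ := hνopt _ (by simpa using hκV.image_swap) (by simpa using hκS.image_swap) m hm j hj

end Optimality

theorem student_advisor_spots_improve_general
    (A : Finset α) (S : Finset σ) (C : Finset γ)
    (prefA : α → Option σ → ℕ) (prefC : γ → Option σ → ℕ)
    (prefSA : σ → Option α → ℕ) (prefSC : σ → Option γ → ℕ)
    (hA : ∀ a ∈ A, StrictPref (prefA a) S)
    (hSA : ∀ s ∈ S, StrictPref (prefSA s) A)
    (qA : α → ℕ) (qC : γ → ℕ)
    -- one run of the PhD algorithm with quotas: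
    (qs qt : ℕ → σ → ℕ)
    (μAS : ℕ → Finset (α × σ)) (μSC : ℕ → Finset (σ × γ))
    -- the extended Gale–Shapley matching on (A, S) with a fixed proposing side:
    (hoptAS : (∀ τ, ManOptQ A S prefA prefSA qA (qs τ) (μAS τ)) ∨
              (∀ τ, WomanOptQ A S prefA prefSA qA (qs τ) (μAS τ)))
    -- the extended Gale–Shapley matching on (S, C) with a fixed proposing side:
    (hoptSC : (∀ τ, ManOptQ S C prefSC prefC (qt τ) qC (μSC τ)) ∨
              (∀ τ, WomanOptQ S C prefSC prefC (qt τ) qC (μSC τ)))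
    -- the student's capacity on (A, S) is reduced by the number of unfilled spots:
    (hupd : ∀ τ s, qs (τ + 1) s + qt τ s = qs τ s + (ptnrsM (μSC τ) s).card) :
    (∀ τ, ∀ s ∈ S, ∀ k, k < qs (τ + 1) s →
        prefSA s (spot (prefSA s) (qs τ s) (ptnrsW (μAS τ) s) k) ≤
          prefSA s (spot (prefSA s) (qs (τ + 1) s) (ptnrsW (μAS (τ + 1)) s) k)) ∧
    (∀ τ, ∀ s ∈ S,
        min (qs (τ + 1) s) ((ptnrsW (μAS τ) s).card) ≤ (ptnrsW (μAS (τ + 1)) s).card) := by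
  have hV : ∀ τ, ValidQ A S qA (qs τ) (μAS τ) := by
    rcases hoptAS with h | h <;> exact fun τ => (h τ).1
  have hS : ∀ τ, StableQ A S prefA prefSA qA (qs τ) (μAS τ) := by
    rcases hoptAS with h | h <;> exact fun τ => (h τ).2.1
  have hq : ∀ τ s, qs (τ + 1) s ≤ qs τ s := fun τ s => by
    have hVSC : ValidQ S C (qt τ) qC (μSC τ) := by rcases hoptSC with h | h <;> exact (h τ).1
    have := hVSC.2.1 s
    have := hupd τ s
    omega
  have hspots : ∀ τ, ∀ s ∈ S, ∀ k < qs (τ + 1) s,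
      prefSA s (spot (prefSA s) (qs τ s) (ptnrsW (μAS τ) s) k) ≤
        prefSA s (spot (prefSA s) (qs (τ + 1) s) (ptnrsW (μAS (τ + 1)) s) k) := by
    intro τ s hs k hk
    rcases hoptAS with hopt | hopt
    · exact spot_le_spot_of_manOptQ hA hSA (hq τ) (hopt τ) (hV (τ + 1)) (hS (τ + 1)) hs hk
    · exact spot_le_spot_of_womanOptQ hA hSA (hq τ) (hV τ) (hS τ) (hopt (τ + 1)) hs hk
  exact ⟨hspots, fun τ s hs => min_card_le_card_of_spot_le (prefSA s)
    (fun _ ha => (hS τ).1.none_lt_of_mem_ptnrsW ha) ((hV τ).2.2 s) ((hV (τ + 1)).2.2 s)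
    (hspots τ s hs)⟩

/-- In the PhD algorithm with quotas (fixed proposing side on each
submarket at every iteration), a student's matches on the advisor–student market cannot
decrease over iterations: for every iteration `τ` and every spot `k < q_s^(τ+1)`, the
student's `k`-th best advisor can only improve; in particular the number of advisors
matched to `s` at iteration `τ + 1` is at least `min(q_s^(τ+1), #advisors at τ)`
(iterations are 0-indexed). -/
theorem student_advisor_spots_improve
    (A : Finset α) (S : Finset σ) (C : Finset γ)
    (prefA : α → Option σ → ℕ) (prefC : γ → Option σ → ℕ)
    (prefSA : σ → Option α → ℕ) (prefSC : σ → Option γ → ℕ)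
    (hA : ∀ a ∈ A, StrictPref (prefA a) S)
    (hC : ∀ c ∈ C, StrictPref (prefC c) S)
    (hSA : ∀ s ∈ S, StrictPref (prefSA s) A)
    (hSC : ∀ s ∈ S, StrictPref (prefSC s) C)
    (qA : α → ℕ) (qS : σ → ℕ) (qC : γ → ℕ)
    -- one run of the PhD algorithm with quotas:
    (qs qt : ℕ → σ → ℕ)
    (μAS : ℕ → Finset (α × σ)) (μSC : ℕ → Finset (σ × γ))
    (hqs0 : qs 0 = qS)
    -- the extended Gale–Shapley matching on (A, S) with a fixed proposing side:
    (hoptAS : (∀ τ, ManOptQ A S prefA prefSA qA (qs τ) (μAS τ)) ∨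
              (∀ τ, WomanOptQ A S prefA prefSA qA (qs τ) (μAS τ)))
    -- the student's capacity on the (S, C) market is his number of advisors:
    (hqt : ∀ τ s, qt τ s = (ptnrsW (μAS τ) s).card)
    -- the extended Gale–Shapley matching on (S, C) with a fixed proposing side:
    (hoptSC : (∀ τ, ManOptQ S C prefSC prefC (qt τ) qC (μSC τ)) ∨
              (∀ τ, WomanOptQ S C prefSC prefC (qt τ) qC (μSC τ)))
    -- the student's capacity on (A, S) is reduced by the number of unfilled spots:
    (hupd : ∀ τ s, qs (τ + 1) s + qt τ s = qs τ s + (ptnrsM (μSC τ) s).card) :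
    (∀ τ, ∀ s ∈ S, ∀ k, k < qs (τ + 1) s →
        prefSA s (spot (prefSA s) (qs τ s) (ptnrsW (μAS τ) s) k) ≤
          prefSA s (spot (prefSA s) (qs (τ + 1) s) (ptnrsW (μAS (τ + 1)) s) k)) ∧
    (∀ τ, ∀ s ∈ S,
        min (qs (τ + 1) s) ((ptnrsW (μAS τ) s).card) ≤ (ptnrsW (μAS (τ + 1)) s).card) :=
  student_advisor_spots_improve_general A S C prefA prefC prefSA prefSC hA hSA qA qC qs qt μAS μSC
    hoptAS hoptSC hupd

end Stmt14
end

section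
/- In an n-sided matching market, if (s₁,…,sₙ) ∈ S₁ × … × Sₙ blocks the matching μ, then there exists k ∈ {1,…,n−1} such that μ_{j−1}(s_{j−1}) = s_j for all 2 ≤ j ≤ k, s_{k+1} >_{s_k} μ_k(s_k), and s_k >_{s_{k+1}} μ_k(s_{k+1}). Consequently, defining M₁ = S₁ and, for k > 1, M_k = the set of persons in S_k matched in μ_{k−1}, at least one of the restricted matchings μ_k|_(M_k, S_{k+1}) is blocked by the pair (s_k, s_{k+1}). -/
open scoped Classical

namespace Stmt17

variable {ι : Type*}

/-- The rank of the right-partner of `m` in the two-sided matching `ν` under the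
preferences `prefR m` (self-based: `prefR m m` is the rank of staying single, which is
used when `m` is unmatched); higher rank = more preferred. -/
noncomputable def rval (prefR : ι → ι → ℕ) (ν : Finset (ι × ι)) (m : ι) : ℕ :=
  WithBot.unbotD (prefR m m) (((ν.filter fun p => p.1 = m).image fun p => prefR m p.2).max)

/-- The rank of the left-partner of `w` in `ν` under the preferences `prefL w`. -/
noncomputable def lval (prefL : ι → ι → ℕ) (ν : Finset (ι × ι)) (w : ι) : ℕ :=
  WithBot.unbotD (prefL w w) (((ν.filter fun p => p.2 = w).image fun p => prefL w p.1).max)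

/-- The pair `(m, w)` blocks the two-sided matching `ν`: both strictly prefer each
other to their current partners (or to staying single if unmatched). -/
def PairBlocks (prefR prefL : ι → ι → ℕ) (ν : Finset (ι × ι)) (m w : ι) : Prop :=
  rval prefR ν m < prefR m w ∧ lval prefL ν w < prefL w m

/-- Individual rationality of a two-sided matching. -/
def PairIR (prefR prefL : ι → ι → ℕ) (ν : Finset (ι × ι)) : Prop :=
  ∀ p ∈ ν, prefR p.1 p.1 < prefR p.1 p.2 ∧ prefL p.2 p.2 < prefL p.2 p.1

/-- A valid `n`-sided matching on the sides `Ssides 0, …, Ssides (n-1)`: each tuple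
lies in the product of the sides and every person appears in at most one tuple. -/
def TupleMatching (n : ℕ) (Ssides : ℕ → Finset ι) (μ : Finset (Fin n → ι)) : Prop :=
  (∀ t ∈ μ, ∀ k : Fin n, t k ∈ Ssides k) ∧
  (∀ t ∈ μ, ∀ t' ∈ μ, ∀ k : Fin n, t k = t' k → t = t')

/-- The induced two-sided matching `μ_k` between sides `k` and `k + 1`. -/
noncomputable def proj (n : ℕ) (μ : Finset (Fin n → ι)) (k : ℕ) (h : k + 1 < n) :
    Finset (ι × ι) :=
  μ.image fun t => (t ⟨k, Nat.lt_of_succ_lt h⟩, t ⟨k + 1, h⟩)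

/-- Individual rationality of an `n`-sided matching: every induced two-sided matching
is individually rational. -/
def NIR (n : ℕ) (prefR prefL : ι → ι → ℕ) (μ : Finset (Fin n → ι)) : Prop :=
  ∀ k, ∀ h : k + 1 < n, PairIR prefR prefL (proj n μ k h)

/-- The tuple `s ∉ μ` blocks the `n`-sided matching `μ`: for every `k`, either
`(s_k, s_{k+1})` is already matched in `μ_k` or it blocks `μ_k`. -/
def NBlocks (n : ℕ) (prefR prefL : ι → ι → ℕ) (Ssides : ℕ → Finset ι)
    (μ : Finset (Fin n → ι)) (s : Fin n → ι) : Prop :=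
  (∀ k : Fin n, s k ∈ Ssides k) ∧ s ∉ μ ∧
  ∀ k, ∀ h : k + 1 < n,
    (s ⟨k, Nat.lt_of_succ_lt h⟩, s ⟨k + 1, h⟩) ∈ proj n μ k h ∨
    PairBlocks prefR prefL (proj n μ k h) (s ⟨k, Nat.lt_of_succ_lt h⟩) (s ⟨k + 1, h⟩)

/-- Stability of an `n`-sided matching. -/
def NStable (n : ℕ) (prefR prefL : ι → ι → ℕ) (Ssides : ℕ → Finset ι)
    (μ : Finset (Fin n → ι)) : Prop :=
  NIR n prefR prefL μ ∧ ∀ s : Fin n → ι, ¬ NBlocks n prefR prefL Ssides μ s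

/-! If every consecutive pair `(s_k, s_{k+1})` were matched in `μ_k`, then, since a person lies
in at most one tuple of `μ`, the tuples witnessing these pairs would all coincide with the one
through `s_0`, and that tuple would be `s` itself. So some link of `s` is unmatched; at the first
such link `k` the pair `(s_k, s_{k+1})` must block `μ_k`, and for `k > 0` the matched link
`(s_{k-1}, s_k)` places `s_k` in a tuple of `μ`. -/

section TupleMatching

variable {n : ℕ} {μ : Finset (Fin n → ι)}

theorem apply_succ_eq_of_mem_proj (hμ : ∀ t ∈ μ, ∀ t' ∈ μ, ∀ k : Fin n, t k = t' k → t = t')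
    {s t : Fin n → ι} (ht : t ∈ μ) {k : ℕ} {hk : k + 1 < n}
    (hs : (s ⟨k, Nat.lt_of_succ_lt hk⟩, s ⟨k + 1, hk⟩) ∈ proj n μ k hk)
    (hts : t ⟨k, Nat.lt_of_succ_lt hk⟩ = s ⟨k, Nat.lt_of_succ_lt hk⟩) :
    t ⟨k + 1, hk⟩ = s ⟨k + 1, hk⟩ := by
  obtain ⟨t', ht', hts'⟩ := Finset.mem_image.mp hs
  obtain rfl : t = t' := hμ t ht t' ht' _ (hts.trans (congrArg Prod.fst hts').symm)
  exact congrArg Prod.snd hts'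

theorem mem_of_forall_mem_proj (hμ : ∀ t ∈ μ, ∀ t' ∈ μ, ∀ k : Fin n, t k = t' k → t = t')
    (hn : 2 ≤ n) {s : Fin n → ι}
    (hs : ∀ k, ∀ hk : k + 1 < n, (s ⟨k, Nat.lt_of_succ_lt hk⟩, s ⟨k + 1, hk⟩) ∈ proj n μ k hk) :
    s ∈ μ := by
  obtain ⟨t, ht, hts₀⟩ := Finset.mem_image.mp (hs 0 (by omega))
  suffices hts : ∀ j, ∀ hj : j < n, t ⟨j, hj⟩ = s ⟨j, hj⟩ by
    rwa [show s = t from funext fun j => (hts j j.2).symm]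
  intro j
  induction j with
  | zero => exact fun _ => congrArg Prod.fst hts₀
  | succ j ih => exact fun hj => apply_succ_eq_of_mem_proj hμ ht (hs j hj) (ih _)

theorem eq_zero_or_exists_mem_apply_eq {s : Fin n → ι} {k : ℕ} (hk : k < n)
    (hprefix : ∀ i, ∀ hi : i < k,
      (s ⟨i, by omega⟩, s ⟨i + 1, by omega⟩) ∈ proj n μ i (by omega)) :
    k = 0 ∨ ∃ t ∈ μ, t ⟨k, hk⟩ = s ⟨k, hk⟩ := by
  cases k with
  | zero => exact Or.inl rfl
  | succ j =>
    obtain ⟨t, ht, hts⟩ := Finset.mem_image.mp (hprefix j j.lt_succ_self)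
    exact Or.inr ⟨t, ht, congrArg Prod.snd hts⟩

end TupleMatching

-- The last conjunct says that `s_k` lies in `M_k`, so `(s_k, s_{k+1})` also blocks the
-- restriction `μ_k|_(M_k, S_{k+1})`.
/-- If the tuple `(s_0, …, s_{n-1})` blocks the matching `μ` of an
`n`-sided market, then there exists `k` with `k + 1 < n` such that all earlier
consecutive pairs of `s` are matched in `μ`, and `(s_k, s_{k+1})` is a blocking pair of
`μ_k`; consequently (since `s_k` is matched in `μ_{k-1}` whenever `k > 0`, i.e.
`s_k ∈ M_k`) the restricted matching `μ_k|_(M_k, S_{k+1})` is blocked by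
`(s_k, s_{k+1})`. -/
theorem blocking_tuple_implies_blocking_pair
    (n : ℕ) (hn : 2 ≤ n) (Ssides : ℕ → Finset ι)
    (prefR prefL : ι → ι → ℕ)
    (μ : Finset (Fin n → ι)) (hμ : TupleMatching n Ssides μ)
    (s : Fin n → ι) (hblock : NBlocks n prefR prefL Ssides μ s) :
    ∃ k, ∃ h : k + 1 < n,
      (∀ i, ∀ hi : i < k,
        (s ⟨i, by omega⟩, s ⟨i + 1, by omega⟩) ∈ proj n μ i (by omega)) ∧
      PairBlocks prefR prefL (proj n μ k h)
        (s ⟨k, Nat.lt_of_succ_lt h⟩) (s ⟨k + 1, h⟩) ∧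
      (k = 0 ∨ ∃ t ∈ μ, t ⟨k, Nat.lt_of_succ_lt h⟩ = s ⟨k, Nat.lt_of_succ_lt h⟩) := by
  obtain ⟨-, hsμ, hlinks⟩ := hblock
  have hunmatched : ∃ k, ∃ hk : k + 1 < n,
      (s ⟨k, Nat.lt_of_succ_lt hk⟩, s ⟨k + 1, hk⟩) ∉ proj n μ k hk := by
    by_contra! hall
    exact hsμ (mem_of_forall_mem_proj hμ.2 hn hall)
  obtain ⟨hk, hkμ⟩ := Nat.find_spec hunmatched
  have hprefix : ∀ i, ∀ hi : i < Nat.find hunmatched,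
      (s ⟨i, by omega⟩, s ⟨i + 1, by omega⟩) ∈ proj n μ i (by omega) := by
    intro i hi
    by_contra hiμ
    exact Nat.find_min hunmatched hi ⟨_, hiμ⟩
  exact ⟨_, hk, hprefix, (hlinks _ hk).resolve_left hkμ,
    eq_zero_or_exists_mem_apply_eq _ hprefix⟩

end Stmt17
end
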